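/- Let E := exp(ℕ) = {e, e², e³, …} ⊂ ℝ. Then Dim_H E = 0 while Dim_H(log E) = Dim_H ℕ = 1, where Dim_H denotes the macroscopic Hausdorff dimension. In particular, the logarithm can strictly increase macroscopic Hausdorff dimension. -/
import Mathlib


open MeasureTheory Real Set

noncomputable section

/-- The interval `[-e^n, e^n)`. -/
def macroBall1 (n : ℕ) : Set ℝ := Set.Ico (-(Real.exp n)) (Real.exp n)

/-- The `n`-th exponential shell in ℝ. -/
def shell1 : ℕ → Set ℝ
  | 0 => macroBall1 0
  | n + 1 => macroBall1 (n + 1) \ macroBall1 n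

/-- The Barlow–Taylor content `ν^n_ρ(E)`: infimum of `Σ (len(I_i)/e^n)^ρ` over finite
covers of `E ∩ S_n` by intervals of length at least 1. -/
def nu1 (ρ : ℝ) (n : ℕ) (E : Set ℝ) : ℝ :=
  sInf { s : ℝ | ∃ (m : ℕ) (c : Fin m → ℝ) (r : Fin m → ℝ),
    (∀ i, 1 ≤ r i) ∧ (E ∩ shell1 n ⊆ ⋃ i, Set.Ico (c i) (c i + r i)) ∧
    s = ∑ i, (r i / Real.exp n) ^ ρ }

/-- The macroscopic (Barlow–Taylor) Hausdorff dimension on ℝ. -/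
def DimH1 (E : Set ℝ) : ℝ :=
  sInf { ρ : ℝ | 0 < ρ ∧ Summable (fun n => nu1 ρ n E) }

end

/-! ### Auxiliary lemmas -/

/-- The set of admissible cover-costs. -/
def nuSet (ρ : ℝ) (n : ℕ) (E : Set ℝ) : Set ℝ :=
  { s : ℝ | ∃ (m : ℕ) (c : Fin m → ℝ) (r : Fin m → ℝ),
    (∀ i, 1 ≤ r i) ∧ (E ∩ shell1 n ⊆ ⋃ i, Set.Ico (c i) (c i + r i)) ∧
    s = ∑ i, (r i / Real.exp n) ^ ρ }

lemma nu1_eq (ρ : ℝ) (n : ℕ) (E : Set ℝ) : nu1 ρ n E = sInf (nuSet ρ n E) := rfl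

lemma nuSet_nonneg (ρ : ℝ) (n : ℕ) (E : Set ℝ) : ∀ s ∈ nuSet ρ n E, (0:ℝ) ≤ s := by
  rintro s ⟨m, c, r, hr, hc, rfl⟩
  exact Finset.sum_nonneg fun i _ => Real.rpow_nonneg
    (div_nonneg (zero_le_one.trans (hr i)) (Real.exp_pos _).le) _

lemma nuSet_bddBelow (ρ : ℝ) (n : ℕ) (E : Set ℝ) : BddBelow (nuSet ρ n E) :=
  ⟨0, fun s hs => nuSet_nonneg ρ n E s hs⟩

lemma shell1_subset (n : ℕ) : shell1 n ⊆ macroBall1 n := by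
  cases n with
  | zero => exact fun x hx => hx
  | succ m => exact Set.diff_subset

lemma nuSet_nonempty (ρ : ℝ) (n : ℕ) (E : Set ℝ) : (nuSet ρ n E).Nonempty := by
  refine ⟨_, 1, fun _ => -(Real.exp n), fun _ => 2 * Real.exp n, fun i => ?_, ?_, rfl⟩
  · show (1:ℝ) ≤ 2 * Real.exp n
    have := Real.one_le_exp (by positivity : (0:ℝ) ≤ (n:ℝ))
    linarith
  · intro x hx
    have hx' : x ∈ macroBall1 n := shell1_subset n hx.2
    refine Set.mem_iUnion.mpr ⟨0, ?_⟩
    constructor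
    · exact hx'.1
    · have : -(Real.exp n) + 2 * Real.exp n = Real.exp n := by ring
      rw [this]; exact hx'.2

lemma nu1_nonneg (ρ : ℝ) (n : ℕ) (E : Set ℝ) : 0 ≤ nu1 ρ n E :=
  Real.sInf_nonneg (nuSet_nonneg ρ n E)

lemma nu1_le {ρ : ℝ} {n : ℕ} {E : Set ℝ} (m : ℕ) (c r : Fin m → ℝ)
    (hr : ∀ i, 1 ≤ r i) (hc : E ∩ shell1 n ⊆ ⋃ i, Set.Ico (c i) (c i + r i)) :
    nu1 ρ n E ≤ ∑ i, (r i / Real.exp n) ^ ρ :=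
  csInf_le (nuSet_bddBelow ρ n E) ⟨m, c, r, hr, hc, rfl⟩

lemma le_nu1 {ρ : ℝ} {n : ℕ} {E : Set ℝ} {b : ℝ}
    (hb : ∀ (m : ℕ) (c r : Fin m → ℝ), (∀ i, 1 ≤ r i) →
      (E ∩ shell1 n ⊆ ⋃ i, Set.Ico (c i) (c i + r i)) →
      b ≤ ∑ i, (r i / Real.exp n) ^ ρ) :
    b ≤ nu1 ρ n E := by
  refine le_csInf (nuSet_nonempty ρ n E) ?_
  rintro s ⟨m, c, r, hr, hc, rfl⟩
  exact hb m c r hr hc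

lemma cast_nat_sub_ge (a b : ℕ) : (a:ℝ) - b ≤ ((a - b : ℕ):ℝ) := by
  rcases le_total b a with h | h
  · rw [Nat.cast_sub h]
  · rw [Nat.sub_eq_zero_of_le h]
    simp only [Nat.cast_zero, sub_nonpos]
    exact_mod_cast h

/-- `(1/e^n)^ρ = (e^{-ρ})^n` -/
lemma one_div_exp_rpow (ρ : ℝ) (n : ℕ) :
    ((1:ℝ) / Real.exp n) ^ ρ = Real.exp (-ρ) ^ n := by
  rw [one_div, ← Real.exp_neg, ← Real.exp_mul, ← Real.exp_nat_mul]
  ring_nf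

/-! ### The exponential set -/

/-- The set `{1, 2, 3, …}` inside ℝ. -/
def natSet : Set ℝ := {x : ℝ | ∃ n : ℕ, 1 ≤ n ∧ x = n}

lemma exp_inter_shell (n : ℕ) :
    Real.exp '' natSet ∩ shell1 n ⊆ Set.Ico (Real.exp ↑(n-1)) (Real.exp ↑(n-1) + 1) := by
  rintro x ⟨⟨y, ⟨k, hk1, rfl⟩, rfl⟩, hsh⟩
  cases n with
  | zero =>
    exfalso
    have h1 : Real.exp (k:ℝ) < Real.exp ((0:ℕ):ℝ) := hsh.2
    have : (k:ℝ) < 0 := by exact_mod_cast Real.exp_lt_exp.mp h1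
    have : (0:ℝ) ≤ (k:ℝ) := Nat.cast_nonneg k
    linarith
  | succ m =>
    obtain ⟨hin, hout⟩ := hsh
    have hlt : Real.exp (k:ℝ) < Real.exp ((m+1:ℕ):ℝ) := hin.2
    have hk_le : (k:ℝ) < (m:ℝ) + 1 := by
      have := Real.exp_lt_exp.mp hlt
      push_cast at this ⊢
      linarith
    have hkm : k ≤ m := by exact_mod_cast Nat.lt_succ_iff.mp (by exact_mod_cast hk_le)
    have hge : Real.exp ((m:ℕ):ℝ) ≤ Real.exp (k:ℝ) := by
      by_contra hcon
      push_neg at hcon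
      exact hout ⟨le_trans (neg_nonpos.mpr (Real.exp_pos _).le) (Real.exp_pos _).le,
        hcon⟩
    have hmk : m ≤ k := by
      have := Real.exp_le_exp.mp hge
      exact_mod_cast this
    have : k = m := le_antisymm hkm hmk
    subst this
    simp only [Nat.add_sub_cancel]
    exact ⟨le_refl _, lt_add_one _⟩

lemma nu1_exp_le (ρ : ℝ) (n : ℕ) :
    nu1 ρ n (Real.exp '' natSet) ≤ ((1:ℝ) / Real.exp n) ^ ρ := by
  have h := nu1_le (ρ := ρ) (n := n) (E := Real.exp '' natSet) 1
    (fun _ => Real.exp ↑(n-1)) (fun _ => 1) (fun _ => le_refl 1) ?_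
  · simpa using h
  · intro x hx
    refine Set.mem_iUnion.mpr ⟨0, ?_⟩
    exact exp_inter_shell n hx

lemma summable_exp_set (ρ : ℝ) (hρ : 0 < ρ) :
    Summable (fun n => nu1 ρ n (Real.exp '' natSet)) := by
  refine Summable.of_nonneg_of_le (fun n => nu1_nonneg ρ n _)
    (fun n => (nu1_exp_le ρ n).trans_eq (one_div_exp_rpow ρ n)) ?_
  exact summable_geometric_of_lt_one (Real.exp_pos _).le
    (Real.exp_lt_one_iff.mpr (by linarith))

/-! ### The natural number set: upper bound -/

lemma natSet_inter_shell_lt (n : ℕ) {x : ℝ} (hx : x ∈ natSet ∩ shell1 n) :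
    0 ≤ x ∧ x < Real.exp n := by
  obtain ⟨⟨k, hk1, rfl⟩, hsh⟩ := hx
  refine ⟨Nat.cast_nonneg k, ?_⟩
  exact (shell1_subset n hsh).2

lemma nu1_nat_le (ρ : ℝ) (n : ℕ) :
    nu1 ρ n natSet ≤ (⌈Real.exp n⌉₊ : ℝ) * ((1:ℝ) / Real.exp n) ^ ρ := by
  set m := ⌈Real.exp (n:ℝ)⌉₊ with hm
  have h := nu1_le (ρ := ρ) (n := n) (E := natSet) m
    (fun i => (i : ℝ)) (fun _ => 1) (fun _ => le_refl 1) ?_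
  · calc nu1 ρ n natSet ≤ ∑ _i : Fin m, ((1:ℝ) / Real.exp n) ^ ρ := h
      _ = (m : ℝ) * ((1:ℝ) / Real.exp n) ^ ρ := by
        rw [Finset.sum_const, Finset.card_univ, Fintype.card_fin, nsmul_eq_mul]
  · intro x hx
    obtain ⟨⟨k, hk1, rfl⟩, hsh⟩ := hx
    have hlt : (k:ℝ) < Real.exp n := (natSet_inter_shell_lt n ⟨⟨k, hk1, rfl⟩, hsh⟩).2
    have hkm : k < m := by
      have : (k:ℝ) < (m:ℝ) := hlt.trans_le (Nat.le_ceil _)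
      exact_mod_cast this
    refine Set.mem_iUnion.mpr ⟨⟨k, hkm⟩, ?_⟩
    exact ⟨le_refl _, lt_add_one _⟩

lemma summable_nat_set (ρ : ℝ) (hρ : 1 < ρ) :
    Summable (fun n => nu1 ρ n natSet) := by
  have hsum : Summable (fun n : ℕ => 2 * Real.exp (1 - ρ) ^ n) := by
    refine Summable.mul_left 2 ?_
    exact summable_geometric_of_lt_one (Real.exp_pos _).le
      (Real.exp_lt_one_iff.mpr (by linarith))
  refine Summable.of_nonneg_of_le (fun n => nu1_nonneg ρ n _) (fun n => ?_) hsum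
  refine (nu1_nat_le ρ n).trans ?_
  rw [one_div_exp_rpow]
  have h1 : (⌈Real.exp (n:ℝ)⌉₊ : ℝ) ≤ 2 * Real.exp n := by
    have := Nat.ceil_lt_add_one (Real.exp_pos (n:ℝ)).le
    have := Real.one_le_exp (by positivity : (0:ℝ) ≤ (n:ℝ))
    linarith
  have h2 : (0:ℝ) ≤ Real.exp (-ρ) ^ n := by positivity
  calc (⌈Real.exp (n:ℝ)⌉₊ : ℝ) * Real.exp (-ρ) ^ n
      ≤ 2 * Real.exp n * Real.exp (-ρ) ^ n := by
        exact mul_le_mul_of_nonneg_right h1 h2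
    _ = 2 * Real.exp (1 - ρ) ^ n := by
        rw [mul_assoc]
        congr 1
        rw [← Real.exp_nat_mul, ← Real.exp_nat_mul, ← Real.exp_add]
        ring_nf

/-! ### The natural number set: lower bound -/

lemma nu1_nat_lower {ρ : ℝ} (hρ0 : 0 < ρ) (hρ1 : ρ ≤ 1) {n : ℕ} (hn : 2 ≤ n) :
    (1/8 : ℝ) ≤ nu1 ρ n natSet := by
  classical
  refine le_nu1 ?_
  intro m c r hr hc
  by_cases hbig : ∃ i, Real.exp (n:ℝ) ≤ r i
  · obtain ⟨i, hi⟩ := hbig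
    have h1 : (1:ℝ) ≤ (r i / Real.exp n) ^ ρ :=
      Real.one_le_rpow ((one_le_div (Real.exp_pos _)).mpr hi) hρ0.le
    have h2 : (r i / Real.exp (n:ℝ)) ^ ρ ≤ ∑ j, (r j / Real.exp n) ^ ρ :=
      Finset.single_le_sum (f := fun j => (r j / Real.exp (n:ℝ)) ^ ρ)
        (fun j _ => Real.rpow_nonneg
          (div_nonneg (zero_le_one.trans (hr j)) (Real.exp_pos _).le) _)
        (Finset.mem_univ i)
    linarith
  · push_neg at hbig
    -- each term dominates `r i / e^n`
    have hterm : ∀ i, r i / Real.exp (n:ℝ) ≤ (r i / Real.exp n) ^ ρ := by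
      intro i
      have ht0 : 0 < r i / Real.exp (n:ℝ) :=
        div_pos (lt_of_lt_of_le one_pos (hr i)) (Real.exp_pos _)
      have ht1 : r i / Real.exp (n:ℝ) ≤ 1 :=
        (div_le_one (Real.exp_pos _)).mpr (hbig i).le
      have := Real.rpow_le_rpow_of_exponent_ge ht0 ht1 hρ1
      rwa [Real.rpow_one] at this
    -- counting the integers in the shell
    obtain ⟨p, rfl⟩ : ∃ p, n = p + 1 := ⟨n - 1, by omega⟩
    have hp1 : 1 ≤ p := by omega
    push_cast at hterm
    set a := ⌈Real.exp (p:ℝ)⌉₊ with ha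
    set b := ⌊Real.exp ((p:ℝ)+1)⌋₊ with hb
    set T : Finset ℕ := Finset.Ico a b with hT
    -- every element of T lies in natSet ∩ shell
    have hTmem : ∀ k ∈ T, (k:ℝ) ∈ natSet ∩ shell1 (p+1) := by
      intro k hk
      rw [hT, Finset.mem_Ico] at hk
      have hka : Real.exp (p:ℝ) ≤ (k:ℝ) := by
        calc Real.exp (p:ℝ) ≤ (a:ℝ) := Nat.le_ceil _
          _ ≤ (k:ℝ) := by exact_mod_cast hk.1
      have hkb : (k:ℝ) < Real.exp ((p:ℝ)+1) := by
        calc (k:ℝ) < (b:ℝ) := by exact_mod_cast hk.2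
          _ ≤ Real.exp ((p:ℝ)+1) := Nat.floor_le (Real.exp_pos _).le
      have hk1 : 1 ≤ k := by
        have : (0:ℝ) < (k:ℝ) := lt_of_lt_of_le (Real.exp_pos _) hka
        exact_mod_cast Nat.one_le_iff_ne_zero.mpr (by exact_mod_cast this.ne' )
      refine ⟨⟨k, hk1, rfl⟩, ?_⟩
      show (k:ℝ) ∈ macroBall1 (p+1) \ macroBall1 p
      constructor
      · constructor
        · exact le_trans (neg_nonpos.mpr (Real.exp_pos _).le) (Nat.cast_nonneg k)
        · show (k:ℝ) < Real.exp ((p+1:ℕ):ℝ)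
          push_cast
          exact hkb
      · rintro ⟨-, h2⟩
        exact absurd h2 (not_lt.mpr hka)
    -- T is covered, so its cardinality is bounded by the total interval mass
    have hTsub : T ⊆ Finset.univ.biUnion (fun i : Fin m =>
        T.filter (fun k : ℕ => c i ≤ (k:ℝ) ∧ (k:ℝ) < c i + r i)) := by
      intro k hk
      have := hc (hTmem k hk)
      obtain ⟨i, hi⟩ := Set.mem_iUnion.mp this
      exact Finset.mem_biUnion.mpr ⟨i, Finset.mem_univ i, Finset.mem_filter.mpr ⟨hk, hi.1, hi.2⟩⟩
    have hfiber : ∀ i : Fin m,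
        ((T.filter (fun k : ℕ => c i ≤ (k:ℝ) ∧ (k:ℝ) < c i + r i)).card : ℝ) ≤ 2 * r i := by
      intro i
      have hsub : T.filter (fun k : ℕ => c i ≤ (k:ℝ) ∧ (k:ℝ) < c i + r i) ⊆
          Finset.Ico ⌈c i⌉₊ (⌈c i⌉₊ + ⌊r i⌋₊ + 1) := by
        intro k hk
        obtain ⟨-, h1, h2⟩ := Finset.mem_filter.mp hk
        rw [Finset.mem_Ico]
        constructor
        · exact Nat.ceil_le.mpr h1
        · have : (k:ℝ) < (⌈c i⌉₊:ℝ) + (⌊r i⌋₊:ℝ) + 1 := by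
            have hcc : c i ≤ (⌈c i⌉₊:ℝ) := Nat.le_ceil _
            have hrr : r i < (⌊r i⌋₊:ℝ) + 1 := Nat.lt_floor_add_one _
            linarith
          exact_mod_cast this
      have hcard : (T.filter (fun k : ℕ => c i ≤ (k:ℝ) ∧ (k:ℝ) < c i + r i)).card
          ≤ ⌊r i⌋₊ + 1 := by
        have := Finset.card_le_card hsub
        rw [Nat.card_Ico] at this
        omega
      calc ((T.filter (fun k : ℕ => c i ≤ (k:ℝ) ∧ (k:ℝ) < c i + r i)).card : ℝ)
          ≤ (⌊r i⌋₊:ℝ) + 1 := by exact_mod_cast hcard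
        _ ≤ r i + 1 := by
            have := Nat.floor_le (zero_le_one.trans (hr i))
            linarith
        _ ≤ 2 * r i := by linarith [hr i]
    have hcount : (T.card : ℝ) ≤ ∑ i, 2 * r i := by
      have h1 : T.card ≤ ∑ i : Fin m,
          (T.filter (fun k : ℕ => c i ≤ (k:ℝ) ∧ (k:ℝ) < c i + r i)).card :=
        le_trans (Finset.card_le_card hTsub) (Finset.card_biUnion_le)
      calc (T.card : ℝ) ≤ ∑ i : Fin m,
            ((T.filter (fun k : ℕ => c i ≤ (k:ℝ) ∧ (k:ℝ) < c i + r i)).card : ℝ) := by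
            exact_mod_cast h1
        _ ≤ ∑ i, 2 * r i := Finset.sum_le_sum fun i _ => hfiber i
    -- cardinality of T is at least e^n / 4
    have hTcard : Real.exp ((p:ℝ)+1) / 4 ≤ (T.card : ℝ) := by
      have hcard : (T.card : ℝ) = ((b - a : ℕ) : ℝ) := by rw [hT, Nat.card_Ico]
      have h1 : (b:ℝ) - a ≤ (T.card : ℝ) := hcard ▸ cast_nat_sub_ge b a
      have hbf : Real.exp ((p:ℝ)+1) - 1 < (b:ℝ) := Nat.sub_one_lt_floor _
      have haf : (a:ℝ) < Real.exp (p:ℝ) + 1 := Nat.ceil_lt_add_one (Real.exp_pos _).le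
      have hE : Real.exp ((p:ℝ)+1) = Real.exp (p:ℝ) * Real.exp 1 := by
        rw [← Real.exp_add]
      have he1 : (2.7:ℝ) < Real.exp 1 := by
        have := Real.exp_one_gt_d9; norm_num at this ⊢; linarith
      have hep : (2.7:ℝ) < Real.exp (p:ℝ) := by
        have : (1:ℝ) ≤ (p:ℝ) := by exact_mod_cast hp1
        calc (2.7:ℝ) < Real.exp 1 := he1
          _ ≤ Real.exp (p:ℝ) := Real.exp_le_exp.mpr this
      nlinarith [Real.exp_pos (p:ℝ)]
    -- putting things together
    have hsum1 : (T.card : ℝ) / (2 * Real.exp ((p:ℝ)+1)) ≤ ∑ i, r i / Real.exp ((p:ℝ)+1) := by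
      rw [div_le_iff₀ (by positivity)]
      have : (∑ i, r i / Real.exp ((p:ℝ)+1)) * (2 * Real.exp ((p:ℝ)+1)) = ∑ i, 2 * r i := by
        rw [Finset.sum_mul]
        refine Finset.sum_congr rfl fun i _ => ?_
        field_simp
      rw [this]
      exact hcount
    have hfinal : (1/8 : ℝ) ≤ ∑ i, r i / Real.exp ((p:ℝ)+1) := by
      refine le_trans ?_ hsum1
      rw [le_div_iff₀ (by positivity)]
      have := hTcard
      nlinarith [Real.exp_pos ((p:ℝ)+1)]
    calc (1/8:ℝ) ≤ ∑ i, r i / Real.exp ((p:ℝ)+1) := hfinal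
      _ ≤ ∑ i, (r i / Real.exp ((p+1:ℕ):ℝ)) ^ ρ := by
          push_cast
          exact Finset.sum_le_sum fun i _ => hterm i

lemma not_summable_nat_set {ρ : ℝ} (hρ0 : 0 < ρ) (hρ1 : ρ ≤ 1) :
    ¬ Summable (fun n => nu1 ρ n natSet) := by
  intro hs
  have h0 := hs.tendsto_atTop_zero
  have hev : ∀ᶠ n in Filter.atTop, nu1 ρ n natSet < 1/8 := by
    have := h0.eventually (gt_mem_nhds (by norm_num : (0:ℝ) < 1/8))
    simpa using this
  have hev2 : ∀ᶠ n in Filter.atTop, (1/8:ℝ) ≤ nu1 ρ n natSet :=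
    Filter.eventually_atTop.mpr ⟨2, fun n hn => nu1_nat_lower hρ0 hρ1 hn⟩
  obtain ⟨n, h1, h2⟩ := (hev.and hev2).exists
  linarith

/-! ### Dimension computations -/

lemma dimH1_exp : DimH1 (Real.exp '' natSet) = 0 := by
  have hset : { ρ : ℝ | 0 < ρ ∧ Summable (fun n => nu1 ρ n (Real.exp '' natSet)) }
      = Set.Ioi 0 := by
    ext ρ
    exact ⟨fun h => h.1, fun h => ⟨h, summable_exp_set ρ h⟩⟩
  rw [DimH1, hset, csInf_Ioi]

lemma dimH1_nat : DimH1 natSet = 1 := by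
  have hset : { ρ : ℝ | 0 < ρ ∧ Summable (fun n => nu1 ρ n natSet) } = Set.Ioi 1 := by
    ext ρ
    constructor
    · rintro ⟨hρ0, hsum⟩
      by_contra hle
      exact not_summable_nat_set hρ0 (by simpa using hle) hsum
    · intro h
      exact ⟨lt_trans one_pos h, summable_nat_set ρ h⟩
  rw [DimH1, hset, csInf_Ioi]

/-- For `E = exp(ℕ) = {e, e², …}` one has `Dim_H E = 0` while
`Dim_H (log E) = Dim_H ℕ = 1`: the logarithm can strictly increase the
macroscopic Hausdorff dimension. -/
theorem dimH_exp_nat_and_log :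
    DimH1 (Real.exp '' {x : ℝ | ∃ n : ℕ, 1 ≤ n ∧ x = n}) = 0 ∧
    DimH1 (Real.log '' (Real.exp '' {x : ℝ | ∃ n : ℕ, 1 ≤ n ∧ x = n})) = 1 ∧
    DimH1 {x : ℝ | ∃ n : ℕ, 1 ≤ n ∧ x = n} = 1 := by
  have hA : {x : ℝ | ∃ n : ℕ, 1 ≤ n ∧ x = n} = natSet := rfl
  have hlog : Real.log '' (Real.exp '' natSet) = natSet := by
    rw [← Set.image_comp]
    have : Real.log ∘ Real.exp = id := funext fun x => Real.log_exp x
    rw [this, Set.image_id]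
  refine ⟨?_, ?_, ?_⟩
  · rw [hA]; exact dimH1_exp
  · rw [hA, hlog]; exact dimH1_nat
  · rw [hA]; exact dimH1_nat
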